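/- arXiv:1510.08044 — 2 statements merged into one kernel-verified Lean document; each statement's English description precedes it below -/
import Mathlib

section
/- Let (X, π) be a pretopological space, F a filter on X, and A ⊆ X. Then F is compact at A if and only if whenever C is a cover of A, there exist F ∈ F and C₁,…,Cₙ ∈ C such that F ⊆ C₁ ∪ … ∪ Cₙ. -/
open Set Filter

/-- A pretopological space: a vicinity filter at each point containing the point. -/
structure Pretop (X : Type*) where
  V : X → Filter X
  pure_le : ∀ x : X, (pure x : Filter X) ≤ V x

/-- Two filters meet (`F # G`). -/
def Meets {X : Type*} (F G : Filter X) : Prop :=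
  ∀ A ∈ F, ∀ B ∈ G, (A ∩ B).Nonempty

namespace Pretop

variable {X Y : Type*} (π : Pretop X)

/-- Convergence: `F → x` iff `F ⊇ V x`. -/
def Conv (F : Filter X) (x : X) : Prop := F ≤ π.V x

/-- Adherence of a filter. -/
def adh (F : Filter X) : Set X := {x | Meets (π.V x) F}

/-- Adherence of a set (adherence of its principal filter). -/
def adhS (A : Set X) : Set X := {x | ∀ U ∈ π.V x, (U ∩ A).Nonempty}

/-- Inherence of a set. -/
def inh (A : Set X) : Set X := (π.adhS Aᶜ)ᶜ

/-- A compact pretopological space: every proper filter has nonempty adherence. -/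
def IsCompactPre : Prop := ∀ F : Filter X, F.NeBot → (π.adh F).Nonempty

/-- Hausdorff: distinct points have disjoint vicinities. -/
def HausdorffPre : Prop :=
  ∀ x y : X, x ≠ y → ∃ U ∈ π.V x, ∃ W ∈ π.V y, U ∩ W = ∅

/-- `F` is compact at `A`: every filter meeting `F` has adherence meeting `A`. -/
def CompactAt (F : Filter X) (A : Set X) : Prop :=
  ∀ G : Filter X, Meets G F → (π.adh G ∩ A).Nonempty

/-- A cover of `A`: every point of `A` has a member of `C` as a vicinity. -/
def IsCover (C : Set (Set X)) (A : Set X) : Prop :=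
  ∀ x ∈ A, ∃ U ∈ C, U ∈ π.V x

/-- Cover-compactness. -/
def CoverCompact (A : Set X) : Prop :=
  ∀ C : Set (Set X), π.IsCover C A →
    ∃ D : Finset (Set X), ↑D ⊆ C ∧ A ⊆ π.inh (⋃ U ∈ D, U)

lemma mem_of_vicinity {x : X} {U : Set X} (h : U ∈ π.V x) : x ∈ U := π.pure_le x h

lemma subset_adhS (A : Set X) : A ⊆ π.adhS A :=
  fun x hx U hU => ⟨x, π.mem_of_vicinity hU, hx⟩

lemma adhS_mono {A B : Set X} (h : A ⊆ B) : π.adhS A ⊆ π.adhS B :=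
  fun x hx U hU => (hx U hU).imp fun y hy => ⟨hy.1, h hy.2⟩

lemma adhS_empty : π.adhS (∅ : Set X) = ∅ := by
  ext x
  simp only [adhS, mem_setOf_eq, Set.inter_empty, Set.mem_empty_iff_false, iff_false]
  intro h
  simpa using h univ univ_mem

lemma adhS_union (A B : Set X) : π.adhS (A ∪ B) = π.adhS A ∪ π.adhS B := by
  apply Subset.antisymm
  · intro x hx
    by_contra hc
    simp only [Set.mem_union, not_or] at hc
    obtain ⟨h1, h2⟩ := hc
    simp only [adhS, mem_setOf_eq, not_forall] at h1 h2
    obtain ⟨U, hU, hUA⟩ := h1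
    obtain ⟨W, hW, hWB⟩ := h2
    obtain ⟨z, hz⟩ := hx (U ∩ W) (inter_mem hU hW)
    rcases hz.2 with hA | hB
    · exact hUA ⟨z, hz.1.1, hA⟩
    · exact hWB ⟨z, hz.1.2, hB⟩
  · exact Set.union_subset (π.adhS_mono Set.subset_union_left)
      (π.adhS_mono Set.subset_union_right)

lemma inh_mono {A B : Set X} (h : A ⊆ B) : π.inh A ⊆ π.inh B :=
  Set.compl_subset_compl.mpr (π.adhS_mono (Set.compl_subset_compl.mpr h))

lemma inh_inter (A B : Set X) : π.inh (A ∩ B) = π.inh A ∩ π.inh B := by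
  simp only [inh, Set.compl_inter, adhS_union, Set.compl_union]

lemma inh_univ : π.inh (univ : Set X) = univ := by
  simp [inh, adhS_empty]

lemma inh_subset (A : Set X) : π.inh A ⊆ A := by
  intro x hx
  by_contra hxA
  exact hx (π.subset_adhS Aᶜ hxA)

/-- The filter `F¹` of members of `F` whose inherence also belongs to `F`. -/
def F1 (F : Filter X) : Filter X where
  sets := {A | A ∈ F ∧ π.inh A ∈ F}
  univ_sets := ⟨univ_mem, by rw [π.inh_univ]; exact univ_mem⟩
  sets_of_superset := fun hA hAB =>
    ⟨mem_of_superset hA.1 hAB, mem_of_superset hA.2 (π.inh_mono hAB)⟩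
  inter_sets := fun hA hB =>
    ⟨inter_mem hA.1 hB.1, by rw [π.inh_inter]; exact inter_mem hA.2 hB.2⟩

lemma mem_F1 {F : Filter X} {A : Set X} : A ∈ π.F1 F ↔ A ∈ F ∧ π.inh A ∈ F := Iff.rfl

/-- The partial regularization `rπ`: vicinities generated by adherences of vicinities. -/
def rpre : Pretop X where
  V x := (π.V x).lift' π.adhS
  pure_le x := le_lift'.mpr fun U hU =>
    mem_pure.mpr (π.subset_adhS U (π.mem_of_vicinity hU))

lemma mem_rpre {x : X} {A : Set X} :
    A ∈ (π.rpre).V x ↔ ∃ U ∈ π.V x, π.adhS U ⊆ A :=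
  mem_lift'_sets fun _ _ h => π.adhS_mono h

end Pretop

/-- Continuity of maps between pretopological spaces. -/
def ContPre {X Y : Type*} (π : Pretop X) (τ : Pretop Y) (f : X → Y) : Prop :=
  ∀ x : X, ∀ W ∈ τ.V (f x), ∃ U ∈ π.V x, f '' U ⊆ W

/-- Perfect maps between pretopological spaces. -/
def PerfectPre {X Y : Type*} (π : Pretop X) (τ : Pretop Y) (f : X → Y) : Prop :=
  ∀ (F : Filter Y) (y : Y), τ.Conv F y → π.CompactAt (F.comap f) (f ⁻¹' {y})

/-- The filter of vicinities of a set `A`. -/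
def VSet {X : Type*} (π : Pretop X) (A : Set X) : Filter X where
  sets := {V | A ⊆ π.inh V}
  univ_sets := by simp [π.inh_univ]
  sets_of_superset := fun h hsub => h.trans (π.inh_mono hsub)
  inter_sets := fun h1 h2 => by
    rw [Set.mem_setOf_eq, π.inh_inter]; exact Set.subset_inter h1 h2

lemma mem_VSet {X : Type*} {π : Pretop X} {A V : Set X} :
    V ∈ VSet π A ↔ A ⊆ π.inh V := Iff.rfl

/-- `f^#[A] = {y : f⁻¹(y) ⊆ A}`. -/
def fsharp {X Y : Type*} (f : X → Y) (A : Set X) : Set Y := {y | f ⁻¹' {y} ⊆ A}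

/-- The θ-quotient pretopology on `Y`. -/
def thetaQuot {X Y : Type*} (π : Pretop X) (f : X → Y) : Pretop Y where
  V y := (VSet π (f ⁻¹' {y})).lift' (fsharp f)
  pure_le y := le_lift'.mpr fun V hV =>
    mem_pure.mpr (fun x hx => π.inh_subset V ((mem_VSet.mp hV) hx))

/-- Strong irreducibility. -/
def StronglyIrreducible {X Y : Type*} (π : Pretop X) (f : X → Y) : Prop :=
  ∀ U V : Set X, (π.inh U).Nonempty → (π.inh V).Nonempty → (U ∩ V).Nonempty →
    ∃ y : Y, f ⁻¹' {y} ⊆ U ∩ V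

/-- The simple extension `Y⁺` determined by a dense subset `S`. -/
def extPlus {X : Type*} (ρ : Pretop X) (S : Set X) : Pretop X where
  V p := (ρ.V p).lift' (fun W => insert p (W ∩ S))
  pure_le p := le_lift'.mpr fun W _ => mem_pure.mpr (Set.mem_insert p _)

/-- `o(A) = {p : ∃ W ∈ V(p), W ∩ S = A}`. -/
def oSet {X : Type*} (ρ : Pretop X) (S : Set X) (A : Set X) : Set X :=
  {p | ∃ W ∈ ρ.V p, W ∩ S = A}

/-- The strict extension `Y^#` determined by a dense subset `S`. -/
def extSharp {X : Type*} (ρ : Pretop X) (S : Set X) : Pretop X where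
  V p := (ρ.V p).lift' (fun W => oSet ρ S (W ∩ S))
  pure_le p := le_lift'.mpr fun W hW => mem_pure.mpr ⟨W, hW, rfl⟩

/-- The θ-pretopology of a topological space: vicinities are closed neighborhoods. -/
def theta (X : Type*) [TopologicalSpace X] : Pretop X where
  V x := (nhds x).lift' closure
  pure_le x := le_lift'.mpr fun U hU =>
    mem_pure.mpr (subset_closure (mem_of_mem_nhds hU))

/-! Everything passes through the filter generated by the complements of the members of a
family `C`: it meets `F` exactly when no member of `F` is covered by finitely many members of `C`,
and no point having a member of `C` as a vicinity adheres to it. Conversely, a filter `G` is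
finer than the filter generated by the complements of `{U | Uᶜ ∈ G}`, and this family covers
every point outside `adh G`. -/

theorem Meets.mono_left {X : Type*} {F F' G : Filter X} (h : Meets F G) (hF : F ≤ F') :
    Meets F' G :=
  fun S hS B hB => h S (hF hS) B hB

theorem meets_generate_compl_iff {X : Type*} {C : Set (Set X)} {F : Filter X} :
    Meets (generate (compl '' C)) F ↔
      ¬ ∃ B ∈ F, ∃ D : Finset (Set X), ↑D ⊆ C ∧ B ⊆ ⋃ U ∈ D, U := by
  constructor
  · rintro hmeets ⟨B, hB, D, hDC, hBD⟩
    have hcompl : (⋂ U ∈ D, Uᶜ) ∈ generate (compl '' C) :=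
      (biInter_finset_mem D).2 fun U hU => mem_generate_of_mem (mem_image_of_mem _ (hDC hU))
    obtain ⟨x, hxD, hxB⟩ := hmeets _ hcompl B hB
    obtain ⟨U, hUD, hxU⟩ := mem_iUnion₂.1 (hBD hxB)
    exact mem_iInter₂.1 hxD U hUD hxU
  · intro hno S hS B hB
    by_contra hdisj
    obtain ⟨t, htC, htfin, htS⟩ := mem_generate_iff.1 hS
    obtain ⟨u, huC, rfl⟩ := subset_image_iff.1 htC
    have hufin : u.Finite := htfin.of_finite_image compl_injective.injOn
    refine hno ⟨B, hB, hufin.toFinset, by simpa using huC, fun x hxB => ?_⟩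
    have hxu : x ∈ ⋃₀ u := by
      by_contra hxu
      exact hdisj ⟨x, htS (compl_sUnion u ▸ hxu), hxB⟩
    simpa [sUnion_eq_biUnion] using hxu

namespace Pretop

theorem notMem_adh_iff {X : Type*} (π : Pretop X) {G : Filter X} {x : X} :
    x ∉ π.adh G ↔ ∃ U ∈ π.V x, Uᶜ ∈ G := by
  simp only [adh, Meets, mem_ofPred_eq, not_forall, not_nonempty_iff_eq_empty, exists_prop]
  constructor
  · rintro ⟨U, hU, S, hS, hUS⟩
    exact ⟨U, hU, mem_of_superset hS fun y hyS hyU => hUS.subset ⟨hyU, hyS⟩⟩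
  · rintro ⟨U, hU, hUc⟩
    exact ⟨U, hU, Uᶜ, hUc, inter_compl_self U⟩

end Pretop

/-- A filter `F` is compact at `A` iff every cover of `A` has a finite subfamily
whose union contains a member of `F`. -/
theorem compactAt_iff_cover {X : Type*} (π : Pretop X) (F : Filter X) (A : Set X) :
    π.CompactAt F A ↔ ∀ C : Set (Set X), π.IsCover C A →
      ∃ B ∈ F, ∃ D : Finset (Set X), ↑D ⊆ C ∧ B ⊆ ⋃ U ∈ D, U := by
  constructor
  · intro hcompact C hC
    by_contra hno
    obtain ⟨x, hxadh, hxA⟩ := hcompact _ (meets_generate_compl_iff.2 hno)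
    obtain ⟨U, hUC, hUx⟩ := hC x hxA
    exact π.notMem_adh_iff.2 ⟨U, hUx, mem_generate_of_mem (mem_image_of_mem _ hUC)⟩ hxadh
  · intro hcover G hGF
    by_contra hno
    have hC : π.IsCover {U | Uᶜ ∈ G} A := fun x hxA => by
      obtain ⟨U, hUx, hUc⟩ := π.notMem_adh_iff.1 fun hxadh => hno ⟨x, hxadh, hxA⟩
      exact ⟨U, hUc, hUx⟩
    have hG : G ≤ generate (compl '' {U | Uᶜ ∈ G}) :=
      le_generate_iff.2 <| by rintro _ ⟨U, hU, rfl⟩; exact hU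
    exact meets_generate_compl_iff.1 (hGF.mono_left hG) (hcover _ hC)
end

section
/- Let (X, π) be a Hausdorff pretopological space. If A, B ⊆ X are disjoint cover-compact subsets, then there exist U with A ⊆ inh_π U, V with B ⊆ inh_π V, and U ∩ V = ∅. -/
open Set Filter

/-!
Cover-compactness upgrades pointwise separation to separation of a set: if each point of `A` has a
vicinity disjoint from some vicinity of `B`, a finite subcover of these point vicinities is a
vicinity of `A`, and the finitely many matching vicinities of `B` intersect to a vicinity of `B`.
Applied first to `B` against a point `x ∉ B` (Hausdorffness gives the pointwise separation), then
to `A` against `B`.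
-/

namespace Pretop

variable {X : Type*} {π : Pretop X}

lemma mem_inh_iff {x : X} {U : Set X} : x ∈ π.inh U ↔ U ∈ π.V x := by
  simp only [inh, adhS, mem_compl_iff, mem_ofPred_eq, not_forall, exists_prop,
    Set.not_nonempty_iff_eq_empty, ← Set.sdiff_eq, Set.sdiff_eq_empty, exists_mem_subset_iff]

lemma vSet_singleton (x : X) : VSet π {x} = π.V x :=
  Filter.ext fun _ => singleton_subset_iff.trans mem_inh_iff

lemma CoverCompact.exists_disjoint_vicinities {A B : Set X} (hA : π.CoverCompact A)
    (h : ∀ x ∈ A, ∃ U ∈ π.V x, ∃ W ∈ VSet π B, Disjoint U W) :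
    ∃ U ∈ VSet π A, ∃ W ∈ VSet π B, Disjoint U W := by
  obtain ⟨D, hDC, hAD⟩ := hA {U | ∃ W ∈ VSet π B, Disjoint U W}
    fun x hx => (h x hx).imp fun U ⟨hU, hUW⟩ => ⟨hUW, hU⟩
  choose! w hwB hdisj using fun U (hU : U ∈ D) => hDC hU
  refine ⟨⋃ U ∈ D, U, hAD, ⋂ U ∈ D, w U, (biInter_finset_mem D).mpr hwB, ?_⟩
  exact Set.disjoint_iUnion₂_left.mpr fun U hU =>
    (hdisj U hU).mono_right (Set.biInter_subset_of_mem hU)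

lemma HausdorffPre.exists_disjoint_vicinities_of_notMem (hH : π.HausdorffPre) {B : Set X}
    (hB : π.CoverCompact B) {x : X} (hx : x ∉ B) :
    ∃ U ∈ π.V x, ∃ W ∈ VSet π B, Disjoint U W := by
  rw [← vSet_singleton]
  obtain ⟨W, hW, U, hU, hWU⟩ := hB.exists_disjoint_vicinities (B := {x}) fun y hy => by
    obtain ⟨W, hW, U, hU, hWU⟩ := hH y x (ne_of_mem_of_not_mem hy hx)
    exact ⟨W, hW, U, (vSet_singleton x).symm ▸ hU, Set.disjoint_iff_inter_eq_empty.mpr hWU⟩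
  exact ⟨U, hU, W, hW, hWU.symm⟩

end Pretop

/-- In a Hausdorff pretopological space, disjoint cover-compact sets have disjoint
vicinities. -/
theorem coverCompact_separation {X : Type*} (π : Pretop X) (hH : π.HausdorffPre)
    {A B : Set X} (hA : π.CoverCompact A) (hB : π.CoverCompact B)
    (hAB : A ∩ B = ∅) :
    ∃ U V : Set X, A ⊆ π.inh U ∧ B ⊆ π.inh V ∧ U ∩ V = ∅ := by
  obtain ⟨U, hU, V, hV, hUV⟩ := hA.exists_disjoint_vicinities fun x hx =>
    hH.exists_disjoint_vicinities_of_notMem hB fun hxB => hAB.subset ⟨hx, hxB⟩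
  exact ⟨U, V, hU, hV, Set.disjoint_iff_inter_eq_empty.mp hUV⟩
end
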